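/- With C₁, C₂ and C₁ ⋆ C₂ as above, define S(C₁,C₂) = (C₁ ⋆ C₂)_{I₁ Δ I₂}, the cross-section of C₁ ⋆ C₂ on the symmetric difference I₁ Δ I₂. Then dim(S(C₁,C₂)) = dim(C₁) + dim(C₂) − dim(C₁^{(s)} ∩ C₂^{(s)}) − dim(C₁^{(p)} + C₂^{(p)}), where C_i^{(p)} = C_i|_{I₁∩I₂} is the projection and C_i^{(s)} = (C_i)_{I₁∩I₂} the cross-section on I₁ ∩ I₂. -/
import Mathlib


open Module

/-- The submodule of functions in `α → F` vanishing on `s`. -/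
def vanishOn (F : Type*) [Field F] {α : Type*} (s : Set α) : Submodule F (α → F) where
  carrier := {x | ∀ a ∈ s, x a = 0}
  add_mem' := by
    intro x y hx hy a ha
    show x a + y a = 0
    rw [hx a ha, hy a ha, add_zero]
  zero_mem' := fun a _ => rfl
  smul_mem' := by
    intro c x hx a ha
    show c • x a = 0
    rw [hx a ha, smul_zero]

variable (F : Type*) [Field F] (J K Jb : Type*)

/-- The `⋆` operation: indices of the first code are `J ⊕ K`, of the second `K ⊕ Jb`,
where `K` plays the role of the common index set `I₁ ∩ I₂`.  On `J` the result agrees with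
`x`, on `Jb` with `y`, and on the common part `K` it is `x − y`. -/
noncomputable def starMap :
    ((J ⊕ K → F) × (K ⊕ Jb → F)) →ₗ[F] (J ⊕ K ⊕ Jb → F) where
  toFun p := Sum.elim (fun j => p.1 (Sum.inl j))
    (Sum.elim (fun k => p.1 (Sum.inr k) - p.2 (Sum.inl k)) (fun j => p.2 (Sum.inr j)))
  map_add' p q := by
    funext i
    rcases i with j | k | j <;> simp <;> ring
  map_smul' c p := by
    funext i
    rcases i with j | k | j <;> simp <;> ring

variable {F J K Jb}

/-- The code `C₁ ⋆ C₂ = {x ⋆ y : x ∈ C₁, y ∈ C₂}`. -/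
noncomputable def starCode (C₁ : Submodule F (J ⊕ K → F)) (C₂ : Submodule F (K ⊕ Jb → F)) :
    Submodule F (J ⊕ K ⊕ Jb → F) :=
  (C₁.prod C₂).map (starMap F J K Jb)

/-- The projection `C₁^{(p)} = C₁|_{I₁ ∩ I₂}` of the first code onto the common part `K`. -/
noncomputable def projK₁ (C₁ : Submodule F (J ⊕ K → F)) : Submodule F (K → F) :=
  C₁.map (LinearMap.funLeft F F (Sum.inr : K → J ⊕ K))

/-- The projection `C₂^{(p)} = C₂|_{I₁ ∩ I₂}` of the second code onto the common part `K`. -/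
noncomputable def projK₂ (C₂ : Submodule F (K ⊕ Jb → F)) : Submodule F (K → F) :=
  C₂.map (LinearMap.funLeft F F (Sum.inl : K → K ⊕ Jb))

/-- The cross-section `C₁^{(s)} = (C₁)_{I₁ ∩ I₂}` on the common part `K`. -/
noncomputable def crossK₁ (C₁ : Submodule F (J ⊕ K → F)) : Submodule F (K → F) :=
  (C₁ ⊓ vanishOn F (Set.range (Sum.inl : J → J ⊕ K))).map
    (LinearMap.funLeft F F (Sum.inr : K → J ⊕ K))

/-- The cross-section `C₂^{(s)} = (C₂)_{I₁ ∩ I₂}` on the common part `K`. -/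
noncomputable def crossK₂ (C₂ : Submodule F (K ⊕ Jb → F)) : Submodule F (K → F) :=
  (C₂ ⊓ vanishOn F (Set.range (Sum.inr : Jb → K ⊕ Jb))).map
    (LinearMap.funLeft F F (Sum.inl : K → K ⊕ Jb))

/-- `S(C₁, C₂)`: the cross-section of `C₁ ⋆ C₂` on the symmetric difference
`I₁ Δ I₂ = J ⊕ Jb`. -/
noncomputable def sCode (C₁ : Submodule F (J ⊕ K → F)) (C₂ : Submodule F (K ⊕ Jb → F)) :
    Submodule F (J ⊕ Jb → F) :=
  (starCode C₁ C₂ ⊓ vanishOn F (Set.range (fun k : K => (Sum.inr (Sum.inl k) : J ⊕ K ⊕ Jb)))).map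
    (LinearMap.funLeft F F (Sum.elim Sum.inl (Sum.inr ∘ Sum.inr) : J ⊕ Jb → J ⊕ K ⊕ Jb))

lemma mem_vanishOn {α : Type*} {s : Set α} {x : α → F} :
    x ∈ vanishOn F s ↔ ∀ a ∈ s, x a = 0 := Iff.rfl

section Aux

variable {M N : Type*} [AddCommGroup M] [Module F M] [AddCommGroup N] [Module F N]

/-- Rank–nullity for the restriction of a linear map to a submodule. -/
lemma finrank_map_add_finrank_inf_ker [FiniteDimensional F M]
    (p : Submodule F M) (f : M →ₗ[F] N) :
    finrank F ↥(p.map f) + finrank F ↥(p ⊓ LinearMap.ker f) = finrank F ↥p := by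
  have h := LinearMap.finrank_range_add_finrank_ker (f.domRestrict p)
  rw [LinearMap.range_domRestrict, LinearMap.ker_domRestrict] at h
  have e : Submodule.comap p.subtype (LinearMap.ker f)
      = Submodule.comap p.subtype (p ⊓ LinearMap.ker f) := by
    ext x
    simp [x.2]
  rw [e, (Submodule.comapSubtypeEquivOfLe
    (inf_le_left : p ⊓ LinearMap.ker f ≤ p)).finrank_eq] at h
  exact h

lemma finrank_map_of_disjoint [FiniteDimensional F M]
    (p : Submodule F M) (f : M →ₗ[F] N) (h : p ⊓ LinearMap.ker f = ⊥) :
    finrank F ↥(p.map f) = finrank F ↥p := by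
  have := finrank_map_add_finrank_inf_ker p f
  rwa [h, finrank_bot, add_zero] at this

/-- `p.prod q` is linearly equivalent to `p × q`. -/
noncomputable def prodEquivAux (p : Submodule F M) (q : Submodule F N) :
    ↥(p.prod q) ≃ₗ[F] ↥p × ↥q where
  toFun x := (⟨x.1.1, x.2.1⟩, ⟨x.1.2, x.2.2⟩)
  invFun y := ⟨(y.1.1, y.2.1), ⟨y.1.2, y.2.2⟩⟩
  left_inv _ := rfl
  right_inv _ := rfl
  map_add' _ _ := rfl
  map_smul' _ _ := rfl

lemma finrank_prod_submodule [FiniteDimensional F M] [FiniteDimensional F N]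
    (p : Submodule F M) (q : Submodule F N) :
    finrank F ↥(p.prod q) = finrank F ↥p + finrank F ↥q := by
  rw [(prodEquivAux p q).finrank_eq, Module.finrank_prod]

end Aux

/-- `dim S(C₁,C₂) = dim C₁ + dim C₂ − dim (C₁^{(s)} ∩ C₂^{(s)})
− dim (C₁^{(p)} + C₂^{(p)})`. -/
theorem sCode_finrank [Fintype J] [Fintype K] [Fintype Jb]
    (C₁ : Submodule F (J ⊕ K → F)) (C₂ : Submodule F (K ⊕ Jb → F)) :
    finrank F ↥(sCode C₁ C₂) =
      finrank F ↥C₁ + finrank F ↥C₂ - finrank F ↥(crossK₁ C₁ ⊓ crossK₂ C₂)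
        - finrank F ↥(projK₁ C₁ ⊔ projK₂ C₂) := by
  classical
  set D : Submodule F ((J ⊕ K → F) × (K ⊕ Jb → F)) := C₁.prod C₂ with hD
  set st := starMap F J K Jb with hst
  set ψ : ((J ⊕ K → F) × (K ⊕ Jb → F)) →ₗ[F] (K → F) :=
    (LinearMap.funLeft F F (Sum.inr : K → J ⊕ K)).comp (LinearMap.fst F _ _)
      - (LinearMap.funLeft F F (Sum.inl : K → K ⊕ Jb)).comp (LinearMap.snd F _ _) with hψdef
  have hψ : ∀ p : (J ⊕ K → F) × (K ⊕ Jb → F), ∀ k,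
      ψ p k = p.1 (Sum.inr k) - p.2 (Sum.inl k) := fun p k => rfl
  set μ : ((J ⊕ K → F) × (K ⊕ Jb → F)) →ₗ[F] (K → F) :=
    (LinearMap.funLeft F F (Sum.inr : K → J ⊕ K)).comp (LinearMap.fst F _ _) with hμdef
  have hμ : ∀ p : (J ⊕ K → F) × (K ⊕ Jb → F), ∀ k, μ p k = p.1 (Sum.inr k) := fun p k => rfl
  have hstv : ∀ p : (J ⊕ K → F) × (K ⊕ Jb → F),
      (∀ j, st p (Sum.inl j) = p.1 (Sum.inl j))
      ∧ (∀ k, st p (Sum.inr (Sum.inl k)) = p.1 (Sum.inr k) - p.2 (Sum.inl k))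
      ∧ (∀ j, st p (Sum.inr (Sum.inr j)) = p.2 (Sum.inr j)) :=
    fun p => ⟨fun _ => rfl, fun _ => rfl, fun _ => rfl⟩
  set A : Submodule F (J ⊕ K ⊕ Jb → F) :=
    starCode C₁ C₂ ⊓ vanishOn F (Set.range fun k : K => (Sum.inr (Sum.inl k) : J ⊕ K ⊕ Jb))
    with hA
  -- step 1 : dim sCode = dim A
  have h1 : finrank F ↥(sCode C₁ C₂) = finrank F ↥A := by
    have hdis : A ⊓ LinearMap.ker (LinearMap.funLeft F F
        (Sum.elim Sum.inl (Sum.inr ∘ Sum.inr) : J ⊕ Jb → J ⊕ K ⊕ Jb)) = ⊥ := by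
      rw [eq_bot_iff]
      intro z hz
      rw [Submodule.mem_inf] at hz
      obtain ⟨hzA, hzk⟩ := hz
      rw [hA, Submodule.mem_inf] at hzA
      have hvan := mem_vanishOn.mp hzA.2
      have hk := LinearMap.mem_ker.mp hzk
      rw [Submodule.mem_bot]
      funext i
      rcases i with j | k | j
      · exact congrFun hk (Sum.inl j)
      · exact hvan _ ⟨k, rfl⟩
      · exact congrFun hk (Sum.inr j)
    exact finrank_map_of_disjoint A _ hdis
  -- step 2 : A = (D ⊓ ker ψ).map st
  have h2 : A = (D ⊓ LinearMap.ker ψ).map st := by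
    apply le_antisymm
    · intro z hz
      rw [hA, Submodule.mem_inf] at hz
      obtain ⟨hzs, hzv⟩ := hz
      obtain ⟨p, hp, rfl⟩ := Submodule.mem_map.mp hzs
      refine Submodule.mem_map.mpr ⟨p, ?_, rfl⟩
      rw [Submodule.mem_inf]
      refine ⟨hp, LinearMap.mem_ker.mpr ?_⟩
      funext k
      have := mem_vanishOn.mp hzv _ ⟨k, rfl⟩
      rw [hψ]
      rw [(hstv p).2.1 k] at this
      simpa using this
    · intro z hz
      obtain ⟨p, hp, rfl⟩ := Submodule.mem_map.mp hz
      rw [Submodule.mem_inf] at hp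
      rw [hA, Submodule.mem_inf]
      refine ⟨Submodule.mem_map.mpr ⟨p, hp.1, rfl⟩, mem_vanishOn.mpr ?_⟩
      rintro _ ⟨k, rfl⟩
      have := congrFun (LinearMap.mem_ker.mp hp.2) k
      rw [hψ] at this
      rw [(hstv p).2.1 k]
      simpa using this
  -- step 3 : rank-nullity for st on D ⊓ ker ψ
  have hle : LinearMap.ker st ≤ LinearMap.ker ψ := by
    intro p hp
    have h0 := LinearMap.mem_ker.mp hp
    rw [LinearMap.mem_ker]
    funext k
    have := congrFun h0 (Sum.inr (Sum.inl k))
    rw [(hstv p).2.1 k] at this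
    rw [hψ]
    simpa using this
  have e1 : finrank F ↥((D ⊓ LinearMap.ker ψ).map st)
      + finrank F ↥(D ⊓ LinearMap.ker st) = finrank F ↥(D ⊓ LinearMap.ker ψ) := by
    have := finrank_map_add_finrank_inf_ker (D ⊓ LinearMap.ker ψ) st
    rwa [inf_assoc, inf_eq_right.mpr hle] at this
  -- step 4 : rank-nullity for ψ on D
  have e2 : finrank F ↥(D.map ψ) + finrank F ↥(D ⊓ LinearMap.ker ψ) = finrank F ↥D :=
    finrank_map_add_finrank_inf_ker D ψ
  -- step 5 : ψ(D) is the sum of projections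
  have e3 : D.map ψ = projK₁ C₁ ⊔ projK₂ C₂ := by
    apply le_antisymm
    · intro z hz
      obtain ⟨p, hp, rfl⟩ := Submodule.mem_map.mp hz
      obtain ⟨hp1, hp2⟩ := Submodule.mem_prod.mp hp
      have m1 : (LinearMap.funLeft F F (Sum.inr : K → J ⊕ K)) p.1 ∈ projK₁ C₁ :=
        Submodule.mem_map.mpr ⟨p.1, hp1, rfl⟩
      have m2 : (LinearMap.funLeft F F (Sum.inl : K → K ⊕ Jb)) p.2 ∈ projK₂ C₂ :=
        Submodule.mem_map.mpr ⟨p.2, hp2, rfl⟩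
      have : ψ p = (LinearMap.funLeft F F (Sum.inr : K → J ⊕ K)) p.1
          - (LinearMap.funLeft F F (Sum.inl : K → K ⊕ Jb)) p.2 := rfl
      rw [this]
      exact Submodule.sub_mem _ (Submodule.mem_sup_left m1) (Submodule.mem_sup_right m2)
    · refine sup_le ?_ ?_
      · intro z hz
        obtain ⟨x, hx, rfl⟩ := Submodule.mem_map.mp hz
        refine Submodule.mem_map.mpr ⟨(x, 0), Submodule.mem_prod.mpr ⟨hx, C₂.zero_mem⟩, ?_⟩
        funext k
        rw [hψ]
        simp [LinearMap.funLeft_apply]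
      · intro z hz
        obtain ⟨y, hy, rfl⟩ := Submodule.mem_map.mp hz
        refine Submodule.mem_map.mpr ⟨(0, -y), Submodule.mem_prod.mpr
          ⟨C₁.zero_mem, C₂.neg_mem hy⟩, ?_⟩
        funext k
        rw [hψ]
        simp [LinearMap.funLeft_apply]
  -- step 6 : dim (D ⊓ ker st) = dim (crossK₁ ⊓ crossK₂)
  have e4 : finrank F ↥(D ⊓ LinearMap.ker st) = finrank F ↥(crossK₁ C₁ ⊓ crossK₂ C₂) := by
    have hmap : (D ⊓ LinearMap.ker st).map μ = crossK₁ C₁ ⊓ crossK₂ C₂ := by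
      apply le_antisymm
      · intro z hz
        obtain ⟨p, hp, rfl⟩ := Submodule.mem_map.mp hz
        rw [Submodule.mem_inf] at hp
        obtain ⟨hpD, hpst⟩ := hp
        obtain ⟨hp1, hp2⟩ := Submodule.mem_prod.mp hpD
        have h0 := LinearMap.mem_ker.mp hpst
        have hJ : ∀ j, p.1 (Sum.inl j) = 0 := by
          intro j
          have := congrFun h0 (Sum.inl j); rwa [(hstv p).1 j] at this
        have hK : ∀ k, p.1 (Sum.inr k) - p.2 (Sum.inl k) = 0 := by
          intro k
          have := congrFun h0 (Sum.inr (Sum.inl k)); rwa [(hstv p).2.1 k] at this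
        have hJb : ∀ j, p.2 (Sum.inr j) = 0 := by
          intro j
          have := congrFun h0 (Sum.inr (Sum.inr j)); rwa [(hstv p).2.2 j] at this
        rw [Submodule.mem_inf]
        constructor
        · refine Submodule.mem_map.mpr ⟨p.1, Submodule.mem_inf.mpr
            ⟨hp1, mem_vanishOn.mpr ?_⟩, rfl⟩
          rintro _ ⟨j, rfl⟩; exact hJ j
        · refine Submodule.mem_map.mpr ⟨p.2, Submodule.mem_inf.mpr
            ⟨hp2, mem_vanishOn.mpr ?_⟩, ?_⟩
          · rintro _ ⟨j, rfl⟩; exact hJb j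
          · funext k
            have := hK k
            rw [sub_eq_zero] at this
            rw [hμ]
            exact this.symm
      · intro w hw
        rw [Submodule.mem_inf] at hw
        obtain ⟨hw1, hw2⟩ := hw
        obtain ⟨x, hx, rfl⟩ := Submodule.mem_map.mp hw1
        obtain ⟨y, hy, hyw⟩ := Submodule.mem_map.mp hw2
        rw [Submodule.mem_inf] at hx hy
        refine Submodule.mem_map.mpr ⟨(x, y), Submodule.mem_inf.mpr
          ⟨Submodule.mem_prod.mpr ⟨hx.1, hy.1⟩, LinearMap.mem_ker.mpr ?_⟩, rfl⟩
        funext i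
        rcases i with j | k | j
        · rw [(hstv (x, y)).1 j]
          exact mem_vanishOn.mp hx.2 _ ⟨j, rfl⟩
        · rw [(hstv (x, y)).2.1 k]
          have := congrFun hyw k
          simp only [LinearMap.funLeft_apply] at this
          simp [this]
        · rw [(hstv (x, y)).2.2 j]
          exact mem_vanishOn.mp hy.2 _ ⟨j, rfl⟩
    have hdis : (D ⊓ LinearMap.ker st) ⊓ LinearMap.ker μ = ⊥ := by
      rw [eq_bot_iff]
      intro p hp
      rw [Submodule.mem_inf] at hp
      obtain ⟨hp', hpμ⟩ := hp
      rw [Submodule.mem_inf] at hp'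
      obtain ⟨hpD, hpst⟩ := hp'
      have h0 := LinearMap.mem_ker.mp hpst
      have hμ0 := LinearMap.mem_ker.mp hpμ
      have hKz : ∀ k, p.1 (Sum.inr k) = 0 := fun k => congrFun hμ0 k
      rw [Submodule.mem_bot]
      have h1 : p.1 = 0 := by
        funext i
        rcases i with j | k
        · have := congrFun h0 (Sum.inl j); rwa [(hstv p).1 j] at this
        · exact hKz k
      have h2 : p.2 = 0 := by
        funext i
        rcases i with k | j
        · have := congrFun h0 (Sum.inr (Sum.inl k))
          rw [(hstv p).2.1 k, hKz k] at this
          simpa using this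
        · have := congrFun h0 (Sum.inr (Sum.inr j)); rwa [(hstv p).2.2 j] at this
      exact Prod.ext h1 h2
    rw [← hmap, finrank_map_of_disjoint _ _ hdis]
  have e5 : finrank F ↥D = finrank F ↥C₁ + finrank F ↥C₂ := finrank_prod_submodule C₁ C₂
  rw [h1, h2, ← e3]
  omega
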